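/- Assume L is nonresonant in the Dirichlet space X_{D,T} with Green's function G_D[T], and L̃ is nonresonant in the Dirichlet space X_{D,2T} with Green's function G_D[2T]. Then G_D[T](t,s) = G_D[2T](t,s) − G_D[2T](2T − t, s) for all (t,s) ∈ I × I. -/

import Mathlib

open MeasureTheory Set

/-- `u` belongs to the space `W^{m,1}([0,T])`: it is of class `C^{m-1}` on `[0,T]` and
its `(m-1)`-st derivative is absolutely continuous, expressed via the fundamental
theorem of calculus with an integrable `m`-th derivative. -/
def MemW (m : ℕ) (T : ℝ) (u : ℝ → ℝ) : Prop :=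
  (∀ k < m, ContinuousOn (iteratedDeriv k u) (Icc 0 T)) ∧
  IntervalIntegrable (iteratedDeriv m u) volume 0 T ∧
  ∀ t ∈ Icc 0 T,
    iteratedDeriv (m - 1) u t
      = iteratedDeriv (m - 1) u 0 + ∫ s in (0:ℝ)..t, iteratedDeriv m u s

/-- The `2n`-th order linear differential operator
`L u = u^{(2n)} + a_{2n-1} u^{(2n-1)} + ⋯ + a_1 u' + a_0 u`. -/
noncomputable def Lop (n : ℕ) (a : ℕ → ℝ → ℝ) (u : ℝ → ℝ) (t : ℝ) : ℝ :=
  iteratedDeriv (2 * n) u t + ∑ k ∈ Finset.range (2 * n), a k t * iteratedDeriv k u t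

/-- Neumann space on `[0,T]`. -/
def XN (n : ℕ) (T : ℝ) : Set (ℝ → ℝ) :=
  {u | MemW (2 * n) T u ∧ ∀ k < n,
    iteratedDeriv (2 * k + 1) u 0 = 0 ∧ iteratedDeriv (2 * k + 1) u T = 0}

/-- Dirichlet space on `[0,T]`. -/
def XD (n : ℕ) (T : ℝ) : Set (ℝ → ℝ) :=
  {u | MemW (2 * n) T u ∧ ∀ k < n,
    iteratedDeriv (2 * k) u 0 = 0 ∧ iteratedDeriv (2 * k) u T = 0}

/-- Mixed space 1 on `[0,T]`. -/
def XM1 (n : ℕ) (T : ℝ) : Set (ℝ → ℝ) :=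
  {u | MemW (2 * n) T u ∧ ∀ k < n,
    iteratedDeriv (2 * k + 1) u 0 = 0 ∧ iteratedDeriv (2 * k) u T = 0}

/-- Mixed space 2 on `[0,T]`. -/
def XM2 (n : ℕ) (T : ℝ) : Set (ℝ → ℝ) :=
  {u | MemW (2 * n) T u ∧ ∀ k < n,
    iteratedDeriv (2 * k) u 0 = 0 ∧ iteratedDeriv (2 * k + 1) u T = 0}

/-- Periodic space on `[0,T]`. -/
def XP (n : ℕ) (T : ℝ) : Set (ℝ → ℝ) :=
  {u | MemW (2 * n) T u ∧ ∀ k < 2 * n, iteratedDeriv k u 0 = iteratedDeriv k u T}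

/-- Antiperiodic space on `[0,T]`. -/
def XA (n : ℕ) (T : ℝ) : Set (ℝ → ℝ) :=
  {u | MemW (2 * n) T u ∧ ∀ k < 2 * n, iteratedDeriv k u 0 = -iteratedDeriv k u T}

/-- The operator `Lop n a` is nonresonant in `X`: the only solution in `X` of the
homogeneous equation (a.e. on `[0,T]`) is the trivial one. -/
def Nonresonant (n : ℕ) (a : ℕ → ℝ → ℝ) (T : ℝ) (X : Set (ℝ → ℝ)) : Prop :=
  ∀ u ∈ X, (∀ᵐ t ∂volume, t ∈ Icc 0 T → Lop n a u t = 0) →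
    ∀ t ∈ Icc 0 T, u t = 0

/-- `G` is the Green's function of `(Lop n a, X)` on `[0,T]`: it is continuous on the
square and, for every `σ ∈ L¹(0,T)`, `t ↦ ∫₀ᵀ G t s σ s ds` is the unique solution in
`X` of `L u = σ` a.e. on `[0,T]`. -/
def IsGreen (n : ℕ) (a : ℕ → ℝ → ℝ) (T : ℝ) (X : Set (ℝ → ℝ)) (G : ℝ → ℝ → ℝ) : Prop :=
  ContinuousOn (fun p : ℝ × ℝ => G p.1 p.2) (Icc 0 T ×ˢ Icc 0 T) ∧
  ∀ σ : ℝ → ℝ, IntervalIntegrable σ volume 0 T →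
    ((fun t => ∫ s in (0:ℝ)..T, G t s * σ s) ∈ X ∧
     (∀ᵐ t ∂volume, t ∈ Icc 0 T →
        Lop n a (fun t' => ∫ s in (0:ℝ)..T, G t' s * σ s) t = σ t) ∧
     ∀ v ∈ X, (∀ᵐ t ∂volume, t ∈ Icc 0 T → Lop n a v t = σ t) →
       ∀ t ∈ Icc 0 T, v t = ∫ s in (0:ℝ)..T, G t s * σ s)

/-- Coefficients of the extended operator `L̃` on `[0,2T]`: the even-order coefficients
are extended evenly about `t = T`, the odd-order ones oddly. -/
noncomputable def tildeCoef (T : ℝ) (a : ℕ → ℝ → ℝ) : ℕ → ℝ → ℝ :=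
  fun k t => if t ≤ T then a k t else (-1 : ℝ) ^ k * a k (2 * T - t)

/-- Coefficients of the reflected operator `Ľ`:
`Ľ u = u^{(2n)} + Σ (-1)^k a_k(T - t) u^{(k)}`. -/
noncomputable def checkCoef (T : ℝ) (a : ℕ → ℝ → ℝ) : ℕ → ℝ → ℝ :=
  fun k t => (-1 : ℝ) ^ k * a k (T - t)

/-- `u` is an eigenfunction of `Lop n a` in `X` associated to the eigenvalue `lam`:
`u ∈ X`, `u` is not identically zero on `[0,T]`, and `L u + lam u = 0` a.e. on `[0,T]`. -/
def IsEigenfun (n : ℕ) (a : ℕ → ℝ → ℝ) (T : ℝ) (X : Set (ℝ → ℝ)) (lam : ℝ)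
    (u : ℝ → ℝ) : Prop :=
  u ∈ X ∧ (∃ t ∈ Icc 0 T, u t ≠ 0) ∧
  ∀ᵐ t ∂volume, t ∈ Icc 0 T → Lop n a u t + lam * u t = 0

/-- The set of eigenvalues (the spectrum) of `Lop n a` in `X`. -/
def SpecSet (n : ℕ) (a : ℕ → ℝ → ℝ) (T : ℝ) (X : Set (ℝ → ℝ)) : Set ℝ :=
  {lam | ∃ u, IsEigenfun n a T X lam u}

/-- `lam0` is the smallest eigenvalue of `Lop n a` in `X`, it is simple (its
eigenfunctions form a one-dimensional space), and it admits an eigenfunction which is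
strictly positive on the interior of the interval. -/
def IsPrincipal (n : ℕ) (a : ℕ → ℝ → ℝ) (T : ℝ) (X : Set (ℝ → ℝ)) (lam0 : ℝ) : Prop :=
  lam0 ∈ SpecSet n a T X ∧
  (∀ mu ∈ SpecSet n a T X, lam0 ≤ mu) ∧
  (∀ u v, IsEigenfun n a T X lam0 u → IsEigenfun n a T X lam0 v →
      ∃ c : ℝ, ∀ t ∈ Icc 0 T, v t = c * u t) ∧
  ∃ u, IsEigenfun n a T X lam0 u ∧ ∀ t ∈ Ioo 0 T, 0 < u t


section Helpers

open intervalIntegral Topology Filter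

lemma iterDeriv_reflect (k : ℕ) (f : ℝ → ℝ) (c x : ℝ) :
    iteratedDeriv k (fun t => f (c - t)) x = (-1 : ℝ) ^ k * iteratedDeriv k f (c - x) := by
  have h1 : (fun t : ℝ => f (c - t)) = fun t => (fun z => f (z + c)) (-t) := by
    funext t; simp [neg_add_eq_sub]
  rw [h1, iteratedDeriv_comp_neg k (fun z => f (z + c)) x,
    iteratedDeriv_comp_add_const, smul_eq_mul]
  simp [neg_add_eq_sub]

lemma ae_ne_pt (c : ℝ) : ∀ᵐ t : ℝ ∂volume, t ≠ c := by
  refine ae_iff.2 ?_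
  simp [Real.volume_singleton]

lemma memW_mono (m : ℕ) (T c : ℝ) (hT : 0 ≤ T) (hTc : T ≤ c) (u : ℝ → ℝ)
    (hu : MemW m c u) : MemW m T u := by
  refine ⟨fun k hk => (hu.1 k hk).mono (Icc_subset_Icc le_rfl hTc), ?_,
    fun t ht => hu.2.2 t (Icc_subset_Icc le_rfl hTc ht)⟩
  refine hu.2.1.mono_set ?_
  rw [uIcc_of_le hT, uIcc_of_le (hT.trans hTc)]
  exact Icc_subset_Icc le_rfl hTc

lemma memW_reflect (m : ℕ) (hm : 1 ≤ m) (c : ℝ) (hc : 0 ≤ c) (u : ℝ → ℝ)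
    (hu : MemW m c u) : MemW m c (fun t => u (c - t)) := by
  obtain ⟨hcont, hint, hftc⟩ := hu
  have hmap : MapsTo (fun t : ℝ => c - t) (Icc 0 c) (Icc 0 c) := by
    intro x hx
    simp only [mem_Icc] at hx ⊢
    constructor <;> linarith [hx.1, hx.2]
  refine ⟨?_, ?_, ?_⟩
  · intro k hk
    have h1 : iteratedDeriv k (fun t => u (c - t))
        = fun t => (-1 : ℝ) ^ k * iteratedDeriv k u (c - t) :=
      funext fun x => iterDeriv_reflect k u c x
    rw [h1]
    exact continuousOn_const.mul
      ((hcont k hk).comp (continuous_const.sub continuous_id).continuousOn hmap)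
  · have h1 : iteratedDeriv m (fun t => u (c - t))
        = fun t => (-1 : ℝ) ^ m * iteratedDeriv m u (c - t) :=
      funext fun x => iterDeriv_reflect m u c x
    rw [h1]
    have h2 := (hint.comp_sub_left c).symm
    simp only [sub_zero, sub_self] at h2
    exact h2.const_mul _
  · intro t ht
    have hct : c - t ∈ Icc 0 c := hmap ht
    have e1 : iteratedDeriv (m - 1) (fun x => u (c - x)) t
        = (-1 : ℝ) ^ (m - 1) * iteratedDeriv (m - 1) u (c - t) := iterDeriv_reflect _ u c t
    have e0 : iteratedDeriv (m - 1) (fun x => u (c - x)) 0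
        = (-1 : ℝ) ^ (m - 1) * iteratedDeriv (m - 1) u c := by
      have := iterDeriv_reflect (m - 1) u c 0
      simpa using this
    have em : ∀ s : ℝ, iteratedDeriv m (fun x => u (c - x)) s
        = (-1 : ℝ) ^ m * iteratedDeriv m u (c - s) := fun s => iterDeriv_reflect m u c s
    have hpow : (-1 : ℝ) ^ m = -(-1 : ℝ) ^ (m - 1) := by
      conv_lhs => rw [show m = (m - 1) + 1 by omega]
      rw [pow_succ]; ring
    have hi1 : IntervalIntegrable (iteratedDeriv m u) volume 0 (c - t) := by
      refine hint.mono_set ?_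
      rw [uIcc_of_le hct.1, uIcc_of_le hc]
      exact Icc_subset_Icc le_rfl hct.2
    have hi2 : IntervalIntegrable (iteratedDeriv m u) volume (c - t) c := by
      refine hint.mono_set ?_
      rw [uIcc_of_le hct.2, uIcc_of_le hc]
      exact Icc_subset_Icc hct.1 le_rfl
    have hadd : (∫ s in (0:ℝ)..(c - t), iteratedDeriv m u s)
        + (∫ s in (c - t)..c, iteratedDeriv m u s)
        = ∫ s in (0:ℝ)..c, iteratedDeriv m u s :=
      integral_add_adjacent_intervals hi1 hi2
    have hsub : (∫ s in (0:ℝ)..t, iteratedDeriv m (fun x => u (c - x)) s)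
        = (-1 : ℝ) ^ m * ∫ s in (0:ℝ)..t, iteratedDeriv m u (c - s) := by
      rw [← intervalIntegral.integral_const_mul]
      exact intervalIntegral.integral_congr fun s _ => em s
    have hcs : (∫ s in (0:ℝ)..t, iteratedDeriv m u (c - s))
        = ∫ s in (c - t)..c, iteratedDeriv m u s := by
      have := intervalIntegral.integral_comp_sub_left (a := (0:ℝ)) (b := t)
        (iteratedDeriv m u) c
      simpa using this
    rw [e1, e0, hsub, hcs, hftc (c - t) hct, hftc c ⟨le_rfl.trans hc, le_rfl⟩, hpow]
    have : (∫ s in (c - t)..c, iteratedDeriv m u s)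
        = (∫ s in (0:ℝ)..c, iteratedDeriv m u s)
          - ∫ s in (0:ℝ)..(c - t), iteratedDeriv m u s := by linarith
    rw [this]; ring

lemma tildeCoef_reflect (T : ℝ) (a : ℕ → ℝ → ℝ) (k : ℕ) (t : ℝ) (ht : t ≠ T) :
    tildeCoef T a k (2 * T - t) = (-1 : ℝ) ^ k * tildeCoef T a k t := by
  unfold tildeCoef
  rcases lt_or_gt_of_ne ht with h | h
  · rw [if_pos h.le, if_neg (by linarith : ¬ 2 * T - t ≤ T)]
    have : 2 * T - (2 * T - t) = t := by ring
    rw [this]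
  · rw [if_neg (not_le.2 h), if_pos (by linarith : 2 * T - t ≤ T), ← mul_assoc,
      ← pow_add, Even.neg_one_pow ⟨k, rfl⟩, one_mul]

lemma Lop_reflect (n : ℕ) (T : ℝ) (a : ℕ → ℝ → ℝ) (u : ℝ → ℝ) (t : ℝ) (ht : t ≠ T) :
    Lop n (tildeCoef T a) (fun x => u (2 * T - x)) t
      = Lop n (tildeCoef T a) u (2 * T - t) := by
  unfold Lop
  rw [iterDeriv_reflect, Even.neg_one_pow (even_two_mul n), one_mul]
  congr 1
  refine Finset.sum_congr rfl fun k _ => ?_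
  rw [iterDeriv_reflect, tildeCoef_reflect T a k t ht]
  ring

lemma vanish_of_integral_sq (T : ℝ) (hT : 0 < T) (h : ℝ → ℝ)
    (hc : ContinuousOn h (Icc 0 T)) (hz : (∫ s in (0:ℝ)..T, h s * h s) = 0) :
    ∀ s ∈ Icc 0 T, h s = 0 := by
  intro s hs
  by_contra hne
  have hint : IntervalIntegrable (fun x => h x * h x) volume 0 T := by
    apply ContinuousOn.intervalIntegrable
    rw [uIcc_of_le hT.le]; exact hc.mul hc
  have hae : (fun x => h x * h x) =ᵐ[volume.restrict (Ioc 0 T)] 0 :=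
    (integral_eq_zero_iff_of_le_of_nonneg_ae hT.le
      (Eventually.of_forall fun x => mul_self_nonneg _) hint).1 hz
  have hεpos : 0 < |h s| / 2 := by
    have := abs_pos.2 hne; linarith
  obtain ⟨δ, hδpos, hδ⟩ := Metric.continuousWithinAt_iff.1 (hc s hs) (|h s| / 2) hεpos
  set d := min (δ / 2) T with hd
  have hdpos : 0 < d := lt_min (by linarith) hT
  set α := max (s - d) 0 with hα
  set β := min (s + d) T with hβ
  have hαβ : α < β := by
    apply max_lt <;> apply lt_min
    · linarith
    · linarith [hs.2]
    · linarith [hs.1]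
    · exact hT
  have hsub : Ioc α β ⊆ {x | h x * h x ≠ 0} ∩ Ioc 0 T := by
    intro x hx
    have hx0 : 0 < x := lt_of_le_of_lt (le_max_right _ _) hx.1
    have hxT : x ≤ T := hx.2.trans (min_le_right _ _)
    have hdd : d ≤ δ / 2 := min_le_left _ _
    have hxd1 : s - d ≤ α := le_max_left _ _
    have hxd2 : β ≤ s + d := min_le_left _ _
    have hdist : dist x s < δ := by
      rw [Real.dist_eq, abs_lt]
      constructor <;> [linarith [hx.1]; linarith [hx.2]]
    have hx1 := hδ (⟨hx0.le, hxT⟩ : x ∈ Icc 0 T) hdist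
    rw [Real.dist_eq] at hx1
    have hxne : h x ≠ 0 := by
      intro h0
      rw [h0, zero_sub, abs_neg] at hx1
      linarith
    exact ⟨mul_ne_zero hxne hxne, hx0, hxT⟩
  have h0 : volume ({x | h x * h x ≠ 0} ∩ Ioc 0 T) = 0 := by
    have h1 := ae_iff.1 hae
    rw [Measure.restrict_apply' measurableSet_Ioc] at h1
    have h2 : {x | h x * h x ≠ 0} = {a | ¬ (fun x => h x * h x) a = (0 : ℝ → ℝ) a} := by
      ext x; simp
    rw [h2]; exact h1
  have hmono : volume (Ioc α β) ≤ volume ({x | h x * h x ≠ 0} ∩ Ioc 0 T) :=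
    measure_mono hsub
  rw [h0, Real.volume_Ioc] at hmono
  exact absurd hmono (not_le.2 (ENNReal.ofReal_pos.2 (by linarith)))

end Helpers


open intervalIntegral Topology Filter in
theorem green_dirichlet_dirichlet (n : ℕ) (hn : 1 ≤ n) (T : ℝ) (hT : 0 < T)
    (a : ℕ → ℝ → ℝ) (ha : ∀ k < 2 * n, IntervalIntegrable (a k) volume 0 T)
    (GD GD2 : ℝ → ℝ → ℝ)
    (hDres : Nonresonant n a T (XD n T))
    (hGD : IsGreen n a T (XD n T) GD)
    (hD2res : Nonresonant n (tildeCoef T a) (2 * T) (XD n (2 * T)))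
    (hGD2 : IsGreen n (tildeCoef T a) (2 * T) (XD n (2 * T)) GD2) :
    ∀ t ∈ Icc 0 T, ∀ s ∈ Icc 0 T,
      GD t s = GD2 t s - GD2 (2 * T - t) s := by
  have hT2 : (0:ℝ) < 2 * T := by linarith
  -- continuity of sections of GD2
  have hGD2sec : ∀ x ∈ Icc (0:ℝ) (2 * T), ContinuousOn (fun s => GD2 x s) (Icc 0 (2 * T)) := by
    intro x hx
    exact hGD2.1.comp ((continuous_const.prodMk continuous_id).continuousOn)
      (fun s hs => Set.mk_mem_prod hx hs)
  have hGDsec : ∀ x ∈ Icc (0:ℝ) T, ContinuousOn (fun s => GD x s) (Icc 0 T) := by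
    intro x hx
    exact hGD.1.comp ((continuous_const.prodMk continuous_id).continuousOn)
      (fun s hs => Set.mk_mem_prod hx hs)
  -- product integrability helper
  have hprod : ∀ x ∈ Icc (0:ℝ) (2 * T), ∀ (g : ℝ → ℝ) (α β : ℝ), α ∈ Icc (0:ℝ) (2 * T) →
      β ∈ Icc (0:ℝ) (2 * T) → IntervalIntegrable g volume α β →
      IntervalIntegrable (fun s => GD2 x s * g s) volume α β := by
    intro x hx g α β hα hβ hg
    have hsub2 : uIcc α β ⊆ Icc (0:ℝ) (2 * T) := by
      rw [← uIcc_of_le hT2.le]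
      exact uIcc_subset_uIcc (by rw [uIcc_of_le hT2.le]; exact hα)
        (by rw [uIcc_of_le hT2.le]; exact hβ)
    exact hg.continuousOn_mul ((hGD2sec x hx).mono hsub2)
  -- Lemma A : reflection identity for GD2 integrals
  have lemA : ∀ τ : ℝ → ℝ, IntervalIntegrable τ volume 0 (2 * T) → ∀ x ∈ Icc (0:ℝ) (2 * T),
      (∫ s in (0:ℝ)..(2 * T), GD2 (2 * T - x) s * τ s)
        = ∫ s in (0:ℝ)..(2 * T), GD2 x s * τ (2 * T - s) := by
    intro τ hτ x hx
    obtain ⟨hm, ho, -⟩ := hGD2.2 τ hτ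
    have hτ' : IntervalIntegrable (fun s => τ (2 * T - s)) volume 0 (2 * T) := by
      have h2 := (hτ.comp_sub_left (2 * T)).symm
      simpa using h2
    obtain ⟨-, -, hu⟩ := hGD2.2 (fun s => τ (2 * T - s)) hτ'
    set v : ℝ → ℝ := fun y => ∫ s in (0:ℝ)..(2 * T), GD2 y s * τ s with hvdef
    have hwX : (fun y => v (2 * T - y)) ∈ XD n (2 * T) := by
      refine ⟨memW_reflect (2 * n) (by omega) (2 * T) hT2.le v hm.1, fun k hk => ⟨?_, ?_⟩⟩
      · rw [iterDeriv_reflect, Even.neg_one_pow (even_two_mul k), one_mul, sub_zero]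
        exact (hm.2 k hk).2
      · rw [iterDeriv_reflect, Even.neg_one_pow (even_two_mul k), one_mul, sub_self]
        exact (hm.2 k hk).1
    have haew : ∀ᵐ t' ∂volume, t' ∈ Icc (0:ℝ) (2 * T) →
        Lop n (tildeCoef T a) (fun y => v (2 * T - y)) t' = τ (2 * T - t') := by
      have hpull : ∀ᵐ t' ∂volume, (2 * T - t' ∈ Icc (0:ℝ) (2 * T) →
          Lop n (tildeCoef T a) v (2 * T - t') = τ (2 * T - t')) :=
        (Measure.measurePreserving_sub_left volume (2 * T)).quasiMeasurePreserving.ae ho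
      filter_upwards [hpull, ae_ne_pt T] with y h1 h2 hy
      rw [Lop_reflect n T a v y h2]
      exact h1 ⟨by linarith [hy.2], by linarith [hy.1]⟩
    exact hu (fun y => v (2 * T - y)) hwX haew x hx
  -- main claim: for every integrable σ and every t ∈ [0,T]
  have key : ∀ t ∈ Icc (0:ℝ) T, ∀ σ : ℝ → ℝ, IntervalIntegrable σ volume 0 T →
      (∫ s in (0:ℝ)..T, GD t s * σ s)
        = (∫ s in (0:ℝ)..T, GD2 t s * σ s) - ∫ s in (0:ℝ)..T, GD2 (2 * T - t) s * σ s := by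
    intro t ht σ hσ
    have htI2 : t ∈ Icc (0:ℝ) (2 * T) := ⟨ht.1, by linarith [ht.2]⟩
    have ht2I2 : 2 * T - t ∈ Icc (0:ℝ) (2 * T) := ⟨by linarith [ht.2], by linarith [ht.1]⟩
    set st : ℝ → ℝ := fun s => if s ≤ T then σ s else -σ (2 * T - s) with hstdef
    set sh : ℝ → ℝ := fun s => if s ≤ T then σ s else 0 with hshdef
    have hσ1 : IntervalIntegrable st volume 0 T := by
      rw [intervalIntegrable_iff_integrableOn_Ioc_of_le hT.le] at hσ ⊢
      exact hσ.congr_fun (fun s hs => by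
        simp only [hstdef]; rw [if_pos hs.2]) measurableSet_Ioc
    have hσ2 : IntervalIntegrable st volume T (2 * T) := by
      have h2 := (hσ.neg.comp_sub_left (2 * T)).symm
      simp only [sub_zero] at h2
      rw [show 2 * T - T = T by ring] at h2
      rw [intervalIntegrable_iff_integrableOn_Ioc_of_le (by linarith : T ≤ 2 * T)] at h2 ⊢
      exact h2.congr_fun (fun s hs => by
        simp only [hstdef, Pi.neg_apply]; rw [if_neg (not_le.2 hs.1)]) measurableSet_Ioc
    have hst : IntervalIntegrable st volume 0 (2 * T) := hσ1.trans hσ2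
    have hsh1 : IntervalIntegrable sh volume 0 T := by
      rw [intervalIntegrable_iff_integrableOn_Ioc_of_le hT.le] at hσ ⊢
      exact hσ.congr_fun (fun s hs => by
        simp only [hshdef]; rw [if_pos hs.2]) measurableSet_Ioc
    have hsh2 : IntervalIntegrable sh volume T (2 * T) := by
      have h2 : IntervalIntegrable (fun _ : ℝ => (0:ℝ)) volume T (2 * T) :=
        intervalIntegrable_const
      rw [intervalIntegrable_iff_integrableOn_Ioc_of_le (by linarith : T ≤ 2 * T)] at h2 ⊢
      exact h2.congr_fun (fun s hs => by
        simp only [hshdef]; rw [if_neg (not_le.2 hs.1)]) measurableSet_Ioc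
    have hsh : IntervalIntegrable sh volume 0 (2 * T) := hsh1.trans hsh2
    obtain ⟨hXD2, hode2, -⟩ := hGD2.2 st hst
    set v : ℝ → ℝ := fun y => ∫ s in (0:ℝ)..(2 * T), GD2 y s * st s with hvdef
    -- oddness of v about T
    have hodd : ∀ x ∈ Icc (0:ℝ) (2 * T), v (2 * T - x) = -v x := by
      intro x hx
      have h1 := lemA st hst x hx
      show (∫ s in (0:ℝ)..(2 * T), GD2 (2 * T - x) s * st s)
        = -∫ s in (0:ℝ)..(2 * T), GD2 x s * st s
      rw [h1, ← intervalIntegral.integral_neg]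
      apply intervalIntegral.integral_congr_ae
      filter_upwards [ae_ne_pt T] with s hsne _
      have hrefl : st (2 * T - s) = -st s := by
        rcases lt_or_gt_of_ne hsne with h | h
        · simp only [hstdef]
          rw [if_pos h.le, if_neg (by linarith : ¬ 2 * T - s ≤ T)]
          have : 2 * T - (2 * T - s) = s := by ring
          rw [this]
        · simp only [hstdef]
          rw [if_neg (not_le.2 h), if_pos (by linarith : 2 * T - s ≤ T)]
          ring
      rw [hrefl]; ring
    -- even derivatives of v vanish at T
    have hzeroT : ∀ k : ℕ, iteratedDeriv (2 * k) v T = 0 := by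
      intro k
      have hev : (fun x => v (2 * T - x)) =ᶠ[𝓝 T] (fun x => -v x) := by
        have hmem : Ioo (0:ℝ) (2 * T) ∈ 𝓝 T := Ioo_mem_nhds hT (by linarith)
        filter_upwards [hmem] with x hx
        exact hodd x ⟨hx.1.le, hx.2.le⟩
      have h1 := hev.iteratedDeriv_eq (2 * k)
      rw [iterDeriv_reflect, Even.neg_one_pow (even_two_mul k), one_mul,
        iteratedDeriv_fun_neg, show 2 * T - T = T by ring] at h1
      linarith
    -- v restricted belongs to XD n T
    have hvXD : v ∈ XD n T :=
      ⟨memW_mono (2 * n) T (2 * T) hT.le (by linarith) v hXD2.1,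
        fun k hk => ⟨(hXD2.2 k hk).1, hzeroT k⟩⟩
    -- v solves L v = σ a.e. on [0,T]
    have hvode : ∀ᵐ x ∂volume, x ∈ Icc (0:ℝ) T → Lop n a v x = σ x := by
      filter_upwards [hode2] with x hx hxI
      have hx2 : x ∈ Icc (0:ℝ) (2 * T) := ⟨hxI.1, by linarith [hxI.2]⟩
      have h1 := hx hx2
      have hLeq : Lop n a v x = Lop n (tildeCoef T a) v x := by
        unfold Lop
        congr 1
        refine Finset.sum_congr rfl fun k _ => ?_
        unfold tildeCoef
        rw [if_pos hxI.2]
      rw [hLeq, h1]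
      simp only [hstdef]
      rw [if_pos hxI.2]
    obtain ⟨-, -, huT⟩ := hGD.2 σ hσ
    have hveq := huT v hvXD hvode t ht
    -- split v t into two pieces
    have i01 : IntervalIntegrable (fun s => GD2 t s * st s) volume 0 T :=
      hprod t htI2 st 0 T ⟨le_rfl, hT2.le⟩ ⟨hT.le, by linarith⟩ hσ1
    have i12 : IntervalIntegrable (fun s => GD2 t s * st s) volume T (2 * T) :=
      hprod t htI2 st T (2 * T) ⟨hT.le, by linarith⟩ ⟨hT2.le, le_rfl⟩ hσ2
    have hsplit : v t = (∫ s in (0:ℝ)..T, GD2 t s * st s)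
        + ∫ s in T..(2 * T), GD2 t s * st s :=
      (intervalIntegral.integral_add_adjacent_intervals i01 i12).symm
    have hp1 : (∫ s in (0:ℝ)..T, GD2 t s * st s) = ∫ s in (0:ℝ)..T, GD2 t s * σ s := by
      apply intervalIntegral.integral_congr
      intro s hs
      rw [uIcc_of_le hT.le] at hs
      simp only [hstdef]; rw [if_pos hs.2]
    have hp2 : (∫ s in T..(2 * T), GD2 t s * st s)
        = -∫ s in T..(2 * T), GD2 t s * σ (2 * T - s) := by
      rw [← intervalIntegral.integral_neg]
      apply intervalIntegral.integral_congr_ae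
      filter_upwards [] with s hs
      rw [uIoc_of_le (by linarith : T ≤ 2 * T)] at hs
      simp only [hstdef]
      rw [if_neg (not_le.2 hs.1)]
      ring
    -- the reflected piece identity (E2)
    have hE2 : (∫ s in (0:ℝ)..T, GD2 (2 * T - t) s * σ s)
        = ∫ s in T..(2 * T), GD2 t s * σ (2 * T - s) := by
      have j01 : IntervalIntegrable (fun s => GD2 (2 * T - t) s * sh s) volume 0 T :=
        hprod (2 * T - t) ht2I2 sh 0 T ⟨le_rfl, hT2.le⟩ ⟨hT.le, by linarith⟩ hsh1
      have j12 : IntervalIntegrable (fun s => GD2 (2 * T - t) s * sh s) volume T (2 * T) :=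
        hprod (2 * T - t) ht2I2 sh T (2 * T) ⟨hT.le, by linarith⟩ ⟨hT2.le, le_rfl⟩ hsh2
      have hshr : IntervalIntegrable (fun s => sh (2 * T - s)) volume 0 (2 * T) := by
        have h2 := (hsh.comp_sub_left (2 * T)).symm
        simpa using h2
      have hmono1 : uIcc (0:ℝ) T ⊆ uIcc (0:ℝ) (2 * T) := by
        rw [uIcc_of_le hT.le, uIcc_of_le hT2.le]
        exact Icc_subset_Icc le_rfl (by linarith)
      have hmono2 : uIcc T (2 * T) ⊆ uIcc (0:ℝ) (2 * T) := by
        rw [uIcc_of_le (by linarith : T ≤ 2 * T), uIcc_of_le hT2.le]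
        exact Icc_subset_Icc hT.le le_rfl
      have k01 : IntervalIntegrable (fun s => GD2 t s * sh (2 * T - s)) volume 0 T :=
        hprod t htI2 _ 0 T ⟨le_rfl, hT2.le⟩ ⟨hT.le, by linarith⟩ (hshr.mono_set hmono1)
      have k12 : IntervalIntegrable (fun s => GD2 t s * sh (2 * T - s)) volume T (2 * T) :=
        hprod t htI2 _ T (2 * T) ⟨hT.le, by linarith⟩ ⟨hT2.le, le_rfl⟩ (hshr.mono_set hmono2)
      have hA := lemA sh hsh t htI2
      have hsplitL : (∫ s in (0:ℝ)..(2 * T), GD2 (2 * T - t) s * sh s)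
          = (∫ s in (0:ℝ)..T, GD2 (2 * T - t) s * sh s)
            + ∫ s in T..(2 * T), GD2 (2 * T - t) s * sh s :=
        (integral_add_adjacent_intervals j01 j12).symm
      have hL1 : (∫ s in (0:ℝ)..T, GD2 (2 * T - t) s * sh s)
          = ∫ s in (0:ℝ)..T, GD2 (2 * T - t) s * σ s := by
        apply intervalIntegral.integral_congr
        intro s hs
        rw [uIcc_of_le hT.le] at hs
        simp only [hshdef]; rw [if_pos hs.2]
      have hL2 : (∫ s in T..(2 * T), GD2 (2 * T - t) s * sh s) = 0 := by
        have hz1 : (∫ s in T..(2 * T), GD2 (2 * T - t) s * sh s)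
            = ∫ s in T..(2 * T), (0:ℝ) := by
          apply intervalIntegral.integral_congr_ae
          filter_upwards [] with s hs
          rw [uIoc_of_le (by linarith : T ≤ 2 * T)] at hs
          simp only [hshdef]
          rw [if_neg (not_le.2 hs.1), mul_zero]
        rw [hz1]; simp
      have hsplitR : (∫ s in (0:ℝ)..(2 * T), GD2 t s * sh (2 * T - s))
          = (∫ s in (0:ℝ)..T, GD2 t s * sh (2 * T - s))
            + ∫ s in T..(2 * T), GD2 t s * sh (2 * T - s) :=
        (integral_add_adjacent_intervals k01 k12).symm
      have hR1 : (∫ s in (0:ℝ)..T, GD2 t s * sh (2 * T - s)) = 0 := by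
        have hz2 : (∫ s in (0:ℝ)..T, GD2 t s * sh (2 * T - s))
            = ∫ s in (0:ℝ)..T, (0:ℝ) := by
          apply intervalIntegral.integral_congr_ae
          filter_upwards [ae_ne_pt T] with s hsne hs
          rw [uIoc_of_le hT.le] at hs
          have hslt : s < T := lt_of_le_of_ne hs.2 hsne
          have hnle : ¬ (2 * T - s ≤ T) := by push_neg; linarith
          simp only [hshdef]
          rw [if_neg hnle, mul_zero]
        rw [hz2]; simp
      have hR2 : (∫ s in T..(2 * T), GD2 t s * sh (2 * T - s))
          = ∫ s in T..(2 * T), GD2 t s * σ (2 * T - s) := by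
        apply intervalIntegral.integral_congr_ae
        filter_upwards [] with s hs
        rw [uIoc_of_le (by linarith : T ≤ 2 * T)] at hs
        simp only [hshdef]
        rw [if_pos (by linarith [hs.1] : 2 * T - s ≤ T)]
      rw [hsplitL, hL1, hL2, hsplitR, hR1, hR2] at hA
      linarith [hA]
    rw [← hveq, hsplit, hp1, hp2, hE2]
    ring
  -- conclude pointwise
  intro t ht s hs
  set hfun : ℝ → ℝ := fun x => GD t x - (GD2 t x - GD2 (2 * T - t) x) with hfdef
  have htI2 : t ∈ Icc (0:ℝ) (2 * T) := ⟨ht.1, by linarith [ht.2]⟩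
  have ht2I2 : 2 * T - t ∈ Icc (0:ℝ) (2 * T) := ⟨by linarith [ht.2], by linarith [ht.1]⟩
  have hsubIcc : Icc (0:ℝ) T ⊆ Icc (0:ℝ) (2 * T) := Icc_subset_Icc le_rfl (by linarith)
  have c1 : ContinuousOn (fun x => GD t x) (Icc 0 T) := hGDsec t ht
  have c2 : ContinuousOn (fun x => GD2 t x) (Icc 0 T) := (hGD2sec t htI2).mono hsubIcc
  have c3 : ContinuousOn (fun x => GD2 (2 * T - t) x) (Icc 0 T) :=
    (hGD2sec (2 * T - t) ht2I2).mono hsubIcc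
  have hconth : ContinuousOn hfun (Icc 0 T) := (c1.sub (c2.sub c3))
  have hinth : IntervalIntegrable hfun volume 0 T := by
    apply ContinuousOn.intervalIntegrable
    rw [uIcc_of_le hT.le]; exact hconth
  have hkey := key t ht hfun hinth
  have ia : IntervalIntegrable (fun x => GD t x * hfun x) volume 0 T :=
    hinth.continuousOn_mul (by rw [uIcc_of_le hT.le]; exact c1)
  have ib : IntervalIntegrable (fun x => GD2 t x * hfun x) volume 0 T :=
    hinth.continuousOn_mul (by rw [uIcc_of_le hT.le]; exact c2)
  have ic : IntervalIntegrable (fun x => GD2 (2 * T - t) x * hfun x) volume 0 T :=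
    hinth.continuousOn_mul (by rw [uIcc_of_le hT.le]; exact c3)
  have hsq : (∫ x in (0:ℝ)..T, hfun x * hfun x) = 0 := by
    have e1 : (∫ x in (0:ℝ)..T, hfun x * hfun x)
        = (∫ x in (0:ℝ)..T, GD t x * hfun x)
          - ((∫ x in (0:ℝ)..T, GD2 t x * hfun x)
            - ∫ x in (0:ℝ)..T, GD2 (2 * T - t) x * hfun x) := by
      rw [← intervalIntegral.integral_sub ib ic, ← intervalIntegral.integral_sub ia (ib.sub ic)]
      apply intervalIntegral.integral_congr
      intro x _
      simp only [hfdef]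
      ring
    rw [e1, hkey]
    ring
  have := vanish_of_integral_sq T hT hfun hconth hsq s hs
  simp only [hfdef] at this
  linarith [this]
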